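/- arXiv:2601.02159 — 2 statements merged into one kernel-verified Lean document; each statement's English description precedes it below -/
import Mathlib

section
/- Let (V, g, T) be a para-Hermitian vector space and A : V → V a g-symmetric endomorphism commuting with T, with dim V = 4 (so n = 2). Then A has at most two distinct complex eigenvalues, and each eigenvalue of A has algebraic multiplicity at least 2. -/
/-!
The `±1`-eigenspaces `P`, `Q` of `T` are complementary and `A`-invariant, and `P` is `g`-isotropic,
so `g` identifies `P` with the dual of `Q`. Under this identification the `g`-symmetry of `A` says
that `A|_P` is the transpose of `A|_Q`; hence `χ_A = χ_{A|_P} · χ_{A|_Q} = χ_{A|_P}²` with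
`deg χ_{A|_P} = 2`, and both claims are statements about the roots of a square.
-/

open Module Polynomial LinearMap

namespace Polynomial

variable {R : Type*} [CommRing R] [IsDomain R]

theorem card_roots_toFinset_pow_le [DecidableEq R] (p : R[X]) (n : ℕ) :
    (p ^ n).roots.toFinset.card ≤ p.natDegree := by
  rcases Nat.eq_zero_or_pos n with rfl | hn
  · simp
  rw [roots_pow, Multiset.toFinset_nsmul _ n hn.ne']
  exact (Multiset.toFinset_card_le _).trans (card_roots' p)

theorem rootMultiplicity_pow (p : R[X]) (n : ℕ) (a : R) :
    (p ^ n).rootMultiplicity a = n * p.rootMultiplicity a := by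
  classical
  rw [← count_roots, ← count_roots, roots_pow, Multiset.count_nsmul]

theorem le_rootMultiplicity_pow {p : R[X]} (hp : p ≠ 0) {n : ℕ} {a : R} (ha : (p ^ n).IsRoot a) :
    n ≤ (p ^ n).rootMultiplicity a := by
  rcases Nat.eq_zero_or_pos n with rfl | hn
  · exact Nat.zero_le _
  have hpa : p.IsRoot a := by
    rw [IsRoot, eval_pow] at ha
    exact pow_eq_zero_iff hn.ne' |>.mp ha
  rw [rootMultiplicity_pow]
  exact Nat.le_mul_of_pos_right n ((rootMultiplicity_pos hp).2 hpa)

end Polynomial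

namespace LinearMap

theorem charpoly_dualMap {R M : Type*} [CommRing R] [AddCommGroup M] [Module R M]
    [Module.Free R M] [Module.Finite R M] (f : M →ₗ[R] M) :
    f.dualMap.charpoly = f.charpoly := by
  let b := Module.Free.chooseBasis R M
  rw [← charpoly_toMatrix f b, ← charpoly_toMatrix f.dualMap b.dualBasis, dualMap_def,
    toMatrix_transpose, Matrix.charpoly_transpose]

theorem charpoly_eq_of_injective_pairing {K M N : Type*} [Field K] [AddCommGroup M] [Module K M]
    [AddCommGroup N] [Module K N] [FiniteDimensional K M] [FiniteDimensional K N]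
    {B : M →ₗ[K] N →ₗ[K] K} (hB : Function.Injective B) (hdim : finrank K M = finrank K N)
    {f : M →ₗ[K] M} {h : N →ₗ[K] N} (hfh : ∀ x y, B (f x) y = B x (h y)) :
    f.charpoly = h.charpoly := by
  have hbij : Function.Bijective B := ⟨hB, (injective_iff_surjective_of_finrank_eq_finrank
    (by rw [Subspace.dual_finrank_eq, hdim])).1 hB⟩
  let e := LinearEquiv.ofBijective B hbij
  have hconj : e.conj f = h.dualMap := by
    ext φ y
    obtain ⟨x, rfl⟩ := e.surjective φ
    simp [e, LinearEquiv.conj_apply, hfh]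
  rw [← e.charpoly_conj f, hconj, charpoly_dualMap]

theorem charpoly_eq_mul_restrict_of_isCompl {K V : Type*} [Field K] [AddCommGroup V] [Module K V]
    [FiniteDimensional K V] {p q : Submodule K V}
    (hpq : IsCompl p q) (f : V →ₗ[K] V) (hp : ∀ x ∈ p, f x ∈ p) (hq : ∀ x ∈ q, f x ∈ q) :
    f.charpoly = (f.restrict hp).charpoly * (f.restrict hq).charpoly := by
  let e := Submodule.prodEquivOfIsCompl p q hpq
  have hconj : e.conj ((f.restrict hp).prodMap (f.restrict hq)) = f := by
    ext v
    obtain ⟨⟨x, y⟩, rfl⟩ := e.surjective v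
    simp [e, LinearEquiv.conj_apply]
  rw [← charpoly_prodMap, ← e.charpoly_conj, hconj]

section

variable {R M : Type*} [Ring R] [AddCommGroup M] [Module R M]

theorem mem_ker_sub_id_iff {T : M →ₗ[R] M} {x : M} : x ∈ ker (T - LinearMap.id) ↔ T x = x := by
  simp [sub_eq_zero]

theorem mem_ker_add_id_iff {T : M →ₗ[R] M} {x : M} : x ∈ ker (T + LinearMap.id) ↔ T x = -x := by
  simp [add_eq_zero_iff_eq_neg]

end

section

variable {K V : Type*} [Field K] [NeZero (2 : K)] [AddCommGroup V] [Module K V]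

theorem isCompl_ker_sub_id_ker_add_id {T : V →ₗ[K] V} (hT : T ∘ₗ T = LinearMap.id) :
    IsCompl (ker (T - LinearMap.id)) (ker (T + LinearMap.id)) := by
  have hTT : ∀ x, T (T x) = x := LinearMap.congr_fun hT
  refine ⟨disjoint_iff_inf_le.2 fun x ⟨hx₁, hx₂⟩ => ?_, codisjoint_iff_le_sup.2 fun x _ => ?_⟩
  · have hx : (2 : K) • x = 0 := by
      rw [two_smul]
      nth_rw 1 [← mem_ker_sub_id_iff.1 hx₁, mem_ker_add_id_iff.1 hx₂, neg_add_cancel]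
    exact (smul_eq_zero.1 hx).resolve_left two_ne_zero
  · have h₁ : (2⁻¹ : K) • (x + T x) ∈ ker (T - LinearMap.id) := by
      simp [hTT, add_comm]
    have h₂ : (2⁻¹ : K) • (x - T x) ∈ ker (T + LinearMap.id) := by
      simp [hTT]
    convert Submodule.add_mem_sup h₁ h₂ using 1
    rw [← smul_add, add_add_sub_cancel, ← two_smul K, smul_smul, inv_mul_cancel₀ two_ne_zero,
      one_smul]

theorem apply_eq_zero_of_mem_ker_sub_id {g : V →ₗ[K] V →ₗ[K] K} {T : V →ₗ[K] V}
    (hcompat : ∀ x y, g (T x) (T y) = - g x y) {x y : V} (hx : x ∈ ker (T - LinearMap.id))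
    (hy : y ∈ ker (T - LinearMap.id)) : g x y = 0 := by
  have h := hcompat x y
  rw [mem_ker_sub_id_iff.1 hx, mem_ker_sub_id_iff.1 hy, eq_neg_iff_add_eq_zero, ← two_mul] at h
  exact (mul_eq_zero.1 h).resolve_left two_ne_zero

end

theorem injective_compl₂_subtype_of_isCompl {K V : Type*} [Field K] [AddCommGroup V] [Module K V]
    {g : V →ₗ[K] V →ₗ[K] K} (hnd : ∀ x, (∀ y, g x y = 0) → x = 0) {P Q : Submodule K V}
    (hPQ : IsCompl P Q) (hP : ∀ x ∈ P, ∀ y ∈ P, g x y = 0) :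
    Function.Injective ((g.domRestrict P).compl₂ Q.subtype) := by
  rw [← ker_eq_bot, Submodule.eq_bot_iff]
  intro x hx
  refine Subtype.ext (hnd x fun y => ?_)
  obtain ⟨p, hp, q, hq, rfl⟩ :=
    Submodule.mem_sup.1 (hPQ.sup_eq_top ▸ Submodule.mem_top : y ∈ P ⊔ Q)
  rw [map_add, hP x x.2 p hp, zero_add]
  exact congr($hx ⟨q, hq⟩)

end LinearMap

theorem exists_charpoly_eq_sq_of_paraHermitian {K V : Type*} [Field K] [NeZero (2 : K)]
    [AddCommGroup V] [Module K V] [FiniteDimensional K V] {g : V →ₗ[K] V →ₗ[K] K} {T A : V →ₗ[K] V}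
    (hnd : ∀ x, (∀ y, g x y = 0) → x = 0) (hT : T ∘ₗ T = LinearMap.id)
    (hdim : finrank K (ker (T - LinearMap.id)) = finrank K (ker (T + LinearMap.id)))
    (hcompat : ∀ x y, g (T x) (T y) = - g x y) (hAT : A ∘ₗ T = T ∘ₗ A)
    (hAsym : ∀ x y, g (A x) y = g x (A y)) :
    ∃ p : K[X], p.Monic ∧ p.natDegree = finrank K (ker (T - LinearMap.id)) ∧
      A.charpoly = p ^ 2 := by
  have hATx : ∀ x, A (T x) = T (A x) := LinearMap.congr_fun hAT
  have hAP : ∀ x ∈ ker (T - LinearMap.id), A x ∈ ker (T - LinearMap.id) := fun x hx => by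
    rw [mem_ker_sub_id_iff, ← hATx, mem_ker_sub_id_iff.1 hx]
  have hAQ : ∀ x ∈ ker (T + LinearMap.id), A x ∈ ker (T + LinearMap.id) := fun x hx => by
    rw [mem_ker_add_id_iff, ← hATx, mem_ker_add_id_iff.1 hx, map_neg]
  have hpair := injective_compl₂_subtype_of_isCompl hnd (isCompl_ker_sub_id_ker_add_id hT)
    fun x hx y hy => apply_eq_zero_of_mem_ker_sub_id hcompat hx hy
  refine ⟨(A.restrict hAP).charpoly, charpoly_monic _, charpoly_natDegree _, ?_⟩
  rw [charpoly_eq_mul_restrict_of_isCompl (isCompl_ker_sub_id_ker_add_id hT) A hAP hAQ, sq,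
    charpoly_eq_of_injective_pairing hpair hdim (f := A.restrict hAP) (h := A.restrict hAQ)
      fun x y => hAsym x y]

theorem stmt5_general {V : Type*} [AddCommGroup V] [Module ℝ V] [FiniteDimensional ℝ V]
    (g : V →ₗ[ℝ] V →ₗ[ℝ] ℝ)
    (hnd : ∀ x, (∀ y, g x y = 0) → x = 0)
    (T : V →ₗ[ℝ] V) (hT : T ∘ₗ T = LinearMap.id)
    (hplus : finrank ℝ (LinearMap.ker (T - LinearMap.id)) = 2)
    (hminus : finrank ℝ (LinearMap.ker (T + LinearMap.id)) = 2)
    (hcompat : ∀ x y, g (T x) (T y) = - g x y)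
    (A : V →ₗ[ℝ] V)
    (hAT : A ∘ₗ T = T ∘ₗ A)
    (hAsym : ∀ x y, g (A x) y = g x (A y)) :
    ((A.charpoly.map (algebraMap ℝ ℂ)).roots.toFinset.card ≤ 2) ∧
    (∀ μ : ℂ, (A.charpoly.map (algebraMap ℝ ℂ)).IsRoot μ →
      2 ≤ (A.charpoly.map (algebraMap ℝ ℂ)).rootMultiplicity μ) := by
  obtain ⟨p, hp, hdeg, hA⟩ :=
    exists_charpoly_eq_sq_of_paraHermitian hnd hT (hplus.trans hminus.symm) hcompat hAT hAsym
  have hdeg' : (p.map (algebraMap ℝ ℂ)).natDegree = 2 := by rw [hp.natDegree_map, hdeg, hplus]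
  rw [hA, Polynomial.map_pow]
  exact ⟨(card_roots_toFinset_pow_le _ 2).trans hdeg'.le,
    fun μ hμ => le_rootMultiplicity_pow (hp.map _).ne_zero hμ⟩

/-- In real dimension `4`, a `g`-symmetric endomorphism commuting with the
para-complex structure `T` has at most two distinct complex eigenvalues, each
of algebraic multiplicity at least `2`. -/
theorem stmt5 {V : Type*} [AddCommGroup V] [Module ℝ V] [FiniteDimensional ℝ V]
    (hV : finrank ℝ V = 4)
    (g : V →ₗ[ℝ] V →ₗ[ℝ] ℝ)
    (hsymm : ∀ x y, g x y = g y x)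
    (hnd : ∀ x, (∀ y, g x y = 0) → x = 0)
    (T : V →ₗ[ℝ] V) (hT : T ∘ₗ T = LinearMap.id)
    (hplus : finrank ℝ (LinearMap.ker (T - LinearMap.id)) = 2)
    (hminus : finrank ℝ (LinearMap.ker (T + LinearMap.id)) = 2)
    (hcompat : ∀ x y, g (T x) (T y) = - g x y)
    (A : V →ₗ[ℝ] V)
    (hAT : A ∘ₗ T = T ∘ₗ A)
    (hAsym : ∀ x y, g (A x) y = g x (A y)) :
    ((A.charpoly.map (algebraMap ℝ ℂ)).roots.toFinset.card ≤ 2) ∧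
    (∀ μ : ℂ, (A.charpoly.map (algebraMap ℝ ℂ)).IsRoot μ →
      2 ≤ (A.charpoly.map (algebraMap ℝ ℂ)).rootMultiplicity μ) :=
  stmt5_general g hnd T hT hplus hminus hcompat A hAT hAsym
end

section
/- Let X₁, X₂, Y₁, Y₂ be vector fields on a smooth manifold M, linearly independent at each point, satisfying the bracket relations [X₂,Y₂]=0, [X₁,X₂] = αX₁ + βX₂, [X₂,Y₁] = ξX₂ + ηY₁, [X₁,Y₂] = δX₁ + φY₂, and [Y₁,Y₂] = μY₁ + νY₂ + γX₁ for smooth functions α, β, ξ, η, δ, φ, μ, ν, γ. Then the Jacobi identity forces the following relations among the coefficient functions: X₂(δ) − Y₂(α) = 0, X₂(γ) − (α+η)γ = 0, and X₂(μ) + Y₂(η) = 0. -/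
/-!
Expand the Jacobi identities for the triples `(X₁, X₂, Y₂)` and `(X₂, Y₁, Y₂)` in the frame,
using the bracket relations together with `⁅X, a • Y⁆ = a • ⁅X, Y⁆ + X a • Y`. Each identity
becomes a vanishing `A`-linear combination of `X₁, X₂, Y₁, Y₂`, so by independence every
coefficient vanishes; the three relations are among these coefficients.
-/

namespace Derivation

variable {R A : Type*} [CommRing R] [CommRing A] [Algebra R A]

theorem lie_smul_right (X Y : Derivation R A A) (a : A) :
    ⁅X, a • Y⁆ = a • ⁅X, Y⁆ + X a • Y := by
  ext b
  simp only [commutator_apply, smul_apply, add_apply, smul_eq_mul, leibniz]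
  ring

theorem lie_smul_left (X Y : Derivation R A A) (a : A) :
    ⁅a • X, Y⁆ = a • ⁅X, Y⁆ - Y a • X := by
  ext b
  simp only [commutator_apply, smul_apply, sub_apply, smul_eq_mul, leibniz]
  ring

end Derivation

open Derivation

section FrameJacobi

variable {R A : Type*} [CommRing R] [CommRing A] [Algebra R A]
  {X₁ X₂ Y₁ Y₂ : Derivation R A A} {α β ξ η δ φ μ ν γ : A}

theorem jacobi_X₁_X₂_Y₂_eq_zero (h1 : ⁅X₂, Y₂⁆ = 0) (h2 : ⁅X₁, X₂⁆ = α • X₁ + β • X₂)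
    (h4 : ⁅X₁, Y₂⁆ = δ • X₁ + φ • Y₂) :
    (X₂ δ - Y₂ α) • X₁ + (-Y₂ β - δ * β) • X₂ + (α * φ + X₂ φ) • Y₂ = 0 := by
  have hX₂X₁ : ⁅X₂, X₁⁆ = -(α • X₁ + β • X₂) := by rw [← lie_skew, h2]
  have jacobi := leibniz_lie X₁ X₂ Y₂
  rw [h1, lie_zero, h2, h4, add_lie, lie_add, lie_smul_left, lie_smul_left, lie_smul_right,
    lie_smul_right, h1, h4, hX₂X₁] at jacobi
  linear_combination (norm := module) -jacobi

theorem jacobi_X₂_Y₁_Y₂_eq_zero (h1 : ⁅X₂, Y₂⁆ = 0) (h2 : ⁅X₁, X₂⁆ = α • X₁ + β • X₂)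
    (h3 : ⁅X₂, Y₁⁆ = ξ • X₂ + η • Y₁)
    (h5 : ⁅Y₁, Y₂⁆ = μ • Y₁ + ν • Y₂ + γ • X₁) :
    (X₂ γ - (α + η) * γ) • X₁ + (μ * ξ - γ * β + Y₂ ξ) • X₂
      + (X₂ μ + Y₂ η) • Y₁ + (X₂ ν - η * ν) • Y₂ = 0 := by
  have hX₂X₁ : ⁅X₂, X₁⁆ = -(α • X₁ + β • X₂) := by rw [← lie_skew, h2]
  have jacobi := leibniz_lie X₂ Y₁ Y₂
  rw [h1, lie_zero, add_zero, h5, h3, lie_add, lie_add, add_lie, lie_smul_right, lie_smul_right,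
    lie_smul_right, lie_smul_left, lie_smul_left, h1, h3, h5, hX₂X₁] at jacobi
  linear_combination (norm := module) jacobi

end FrameJacobi

/-- Pointwise linear independence of the frame is expressed as `A`-linear independence of
the derivations. -/
theorem stmt17 {A : Type*} [CommRing A] [Algebra ℝ A]
    (X₁ X₂ Y₁ Y₂ : Derivation ℝ A A)
    (hindep : ∀ a b c d : A,
      a • X₁ + b • X₂ + c • Y₁ + d • Y₂ = 0 → a = 0 ∧ b = 0 ∧ c = 0 ∧ d = 0)
    (α β ξ η δ φ μ ν γ : A)
    (h1 : ⁅X₂, Y₂⁆ = 0)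
    (h2 : ⁅X₁, X₂⁆ = α • X₁ + β • X₂)
    (h3 : ⁅X₂, Y₁⁆ = ξ • X₂ + η • Y₁)
    (h4 : ⁅X₁, Y₂⁆ = δ • X₁ + φ • Y₂)
    (h5 : ⁅Y₁, Y₂⁆ = μ • Y₁ + ν • Y₂ + γ • X₁) :
    X₂ δ - Y₂ α = 0 ∧ X₂ γ - (α + η) * γ = 0 ∧ X₂ μ + Y₂ η = 0 := by
  obtain ⟨hδα, -, -, -⟩ := hindep (X₂ δ - Y₂ α) (-Y₂ β - δ * β) 0 _ <| by
    rw [zero_smul, add_zero]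
    exact jacobi_X₁_X₂_Y₂_eq_zero h1 h2 h4
  obtain ⟨hγ, -, hμη, -⟩ := hindep _ _ _ _ (jacobi_X₂_Y₁_Y₂_eq_zero h1 h2 h3 h5)
  exact ⟨hδα, hγ, hμη⟩
end
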